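/- arXiv:2012.10178 — 7 statements merged into one kernel-verified Lean document; each statement's English description precedes it below -/
import Mathlib

section
/- The bracket on the vector space with basis {e_i : i ∈ ℕ, i ≥ 1} defined by [e_i, e_j] = c_{i,j} e_{i+j}, where c_{i,j} = 1 if i - j ≡ 1 (mod 3), c_{i,j} = 0 if i - j ≡ 0 (mod 3), and c_{i,j} = -1 if i - j ≡ -1 (mod 3), satisfies the Jacobi identity and antisymmetry, and hence defines a Lie algebra structure (the algebra 𝐧₁). -/
/-- Structure constants of the Lie algebra `𝐧₁`: `c i j = 1, 0, -1` according to
whether `i - j ≡ 1, 0, -1 (mod 3)`. -/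
def cc (i j : ℕ) : ℤ :=
  if ((i : ℤ) - j) % 3 = 1 then 1 else if ((i : ℤ) - j) % 3 = 2 then -1 else 0

/-- The free `ℂ`-vector space on the basis `{e_i : i ≥ 1}` (indices are positive naturals). -/
abbrev N1Space := {n : ℕ // 0 < n} →₀ ℂ

/-- The bilinear bracket `[e_i, e_j] = c_{i,j} e_{i+j}` extended bilinearly. -/
noncomputable def n1br (f g : N1Space) : N1Space :=
  f.sum fun i a => g.sum fun j b =>
    (a * b * (cc i.1 j.1 : ℂ)) •
      Finsupp.single ⟨i.1 + j.1, Nat.add_pos_left i.2 j.1⟩ (1 : ℂ)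

/-!
Both identities are multilinear, so it suffices to check them on basis vectors. There
`[e_i, e_j] = c i j • e_(i+j)`, so antisymmetry is `c i j = - c j i`, and the Jacobiator of
`e_i, e_j, e_k` is a multiple of `e_(i+j+k)` by the cyclic sum
`c j k * c i (j + k) + c k i * c j (k + i) + c i j * c k (i + j)`. Since `c i j` only depends on
`i - j mod 3`, this sum only depends on `i, j, k` mod 3 and vanishes by inspecting 27 cases.
-/

namespace LinearMap

variable {ι R M : Type*} [CommSemiring R] [AddCommMonoid M] [Module R M]

def jacobiator (B : M →ₗ[R] M →ₗ[R] M) (x y : M) : M →ₗ[R] M :=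
  B x ∘ₗ B y + B y ∘ₗ B.flip x + B.flip (B x y)

variable (B : M →ₗ[R] M →ₗ[R] M)

@[simp]
lemma jacobiator_apply (x y z : M) :
    B.jacobiator x y z = B x (B y z) + B y (B z x) + B z (B x y) := rfl

lemma jacobiator_rotate (x y z : M) : B.jacobiator x y z = B.jacobiator y z x := by
  simp only [jacobiator_apply]; abel

theorem jacobiator_eq_zero_of_basis (b : Module.Basis ι R M)
    (h : ∀ i j k, B.jacobiator (b i) (b j) (b k) = 0) (x y z : M) : B.jacobiator x y z = 0 := by
  -- Linear in the last slot and cyclically symmetric: swap in basis vectors one slot at a time.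
  have h₁ (i j : ι) : B.jacobiator (b i) (b j) = 0 := b.ext fun k => h i j k
  have h₂ (i : ι) (z : M) : B.jacobiator z (b i) = 0 := b.ext fun j => by
    rw [jacobiator_rotate, h₁, zero_apply, zero_apply]
  have h₃ : B.jacobiator y z = 0 := b.ext fun i => by
    rw [jacobiator_rotate, h₂, zero_apply, zero_apply]
  rw [jacobiator_rotate, h₃, zero_apply]

end LinearMap

namespace Finsupp

variable {ι R : Type*} [AddCommSemigroup ι] [CommRing R] (c : ι → ι → R)

noncomputable def structConstBracket : (ι →₀ R) →ₗ[R] (ι →₀ R) →ₗ[R] (ι →₀ R) :=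
  linearCombination R fun i => linearCombination R fun j => single (i + j) (c i j)

lemma structConstBracket_apply (f g : ι →₀ R) :
    structConstBracket c f g =
      f.sum fun i a => g.sum fun j b => single (i + j) (a * b * c i j) := by
  simp only [structConstBracket, linearCombination_apply, LinearMap.finsupp_sum_apply,
    LinearMap.smul_apply, smul_sum, smul_single, smul_eq_mul, mul_assoc]

lemma structConstBracket_single (i j : ι) (a b : R) :
    structConstBracket c (single i a) (single j b) = single (i + j) (a * b * c i j) := by
  rw [structConstBracket_apply, sum_single_index, sum_single_index] <;> simp

lemma structConstBracket_antisymm (hc : ∀ i j, c i j = - c j i) (f g : ι →₀ R) :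
    structConstBracket c f g = - structConstBracket c g f := by
  have : structConstBracket c + (structConstBracket c).flip = 0 :=
    LinearMap.ext_basis Finsupp.basisSingleOne Finsupp.basisSingleOne fun i j => by
      simp [structConstBracket_single, hc i j, add_comm i j]
  exact eq_neg_of_add_eq_zero_left congr($this f g)

lemma jacobiator_structConstBracket_single (i j k : ι) :
    (structConstBracket c).jacobiator (single i 1) (single j 1) (single k 1) =
      single (i + j + k) (c j k * c i (j + k) + c k i * c j (k + i) + c i j * c k (i + j)) := by
  have e₁ : i + (j + k) = i + j + k := (add_assoc ..).symm
  have e₂ : j + (k + i) = i + j + k := by ac_rfl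
  have e₃ : k + (i + j) = i + j + k := add_comm ..
  simp only [LinearMap.jacobiator_apply, structConstBracket_single, e₁, e₂, e₃, ← single_add,
    one_mul]

theorem jacobiator_structConstBracket_eq_zero
    (hc : ∀ i j k, c j k * c i (j + k) + c k i * c j (k + i) + c i j * c k (i + j) = 0)
    (f g h : ι →₀ R) : (structConstBracket c).jacobiator f g h = 0 :=
  (structConstBracket c).jacobiator_eq_zero_of_basis Finsupp.basisSingleOne
    (fun i j k => by
      simp only [coe_basisSingleOne, jacobiator_structConstBracket_single, hc, single_zero]) f g h

end Finsupp

open Finsupp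

lemma n1br_eq_structConstBracket (f g : N1Space) :
    n1br f g = structConstBracket (fun i j : {n : ℕ // 0 < n} => (cc i j : ℂ)) f g := by
  simp only [n1br, structConstBracket_apply, smul_single_one]
  rfl

lemma cc_antisymm (i j : ℕ) : cc i j = - cc j i := by
  unfold cc; split_ifs <;> omega

lemma cc_eq_zmod (i j : ℕ) :
    cc i j = if (i - j : ZMod 3) = 1 then 1 else if (i - j : ZMod 3) = 2 then -1 else 0 := by
  have hcast : (i - j : ZMod 3) = (((i - j : ℤ) % 3 : ℤ) : ZMod 3) := by
    exact_mod_cast (ZMod.intCast_mod (i - j : ℤ) 3).symm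
  rw [cc, hcast]
  obtain h | h | h : (i - j : ℤ) % 3 = 0 ∨ (i - j : ℤ) % 3 = 1 ∨ (i - j : ℤ) % 3 = 2 := by omega
  all_goals rw [h]; decide

lemma cc_jacobi (i j k : ℕ) :
    cc j k * cc i (j + k) + cc k i * cc j (k + i) + cc i j * cc k (i + j) = 0 := by
  simp only [cc_eq_zmod, Nat.cast_add]
  generalize (i : ZMod 3) = a, (j : ZMod 3) = b, (k : ZMod 3) = c
  revert a b c
  decide

/-- the bracket `[e_i,e_j] = c_{i,j} e_{i+j}` on the span of `{e_i : i ≥ 1}`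
is antisymmetric and satisfies the Jacobi identity, hence defines a Lie algebra `𝐧₁`. -/
theorem statement0 :
    (∀ f g : N1Space, n1br f g = - n1br g f) ∧
    (∀ f g h : N1Space,
      n1br f (n1br g h) + n1br g (n1br h f) + n1br h (n1br f g) = 0) := by
  refine ⟨fun f g => ?_, fun f g h => ?_⟩
  · simp only [n1br_eq_structConstBracket]
    exact structConstBracket_antisymm _ (fun i j => by simp [cc_antisymm i j]) f g
  · simpa only [n1br_eq_structConstBracket, LinearMap.jacobiator_apply] using
      jacobiator_structConstBracket_eq_zero _ (fun i j k => by exact_mod_cast cc_jacobi i j k) f g h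
end

section
/- In the Lie algebra 𝐧₁ with basis {e_i : i ≥ 1} and bracket [e_i,e_j] = c_{i,j} e_{i+j} (c_{i,j} as determined by (i-j) mod 3), the elements e₁ and e₂ generate the whole algebra: every e_n with n ≥ 3 lies in the Lie subalgebra generated by e₁ and e₂. -/
/-- in the Lie algebra `𝐧₁` with basis `{e_i : i ≥ 1}` and bracket
`[e_i,e_j] = c_{i,j} e_{i+j}`, the elements `e₁`, `e₂` generate the whole algebra:
every `e_n` with `n ≥ 3` lies in the Lie subalgebra generated by `e₁` and `e₂`. -/
theorem statement1 (L : Type*) [LieRing L] [LieAlgebra ℂ L] (e : ℕ → L)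
    (hbr : ∀ i j : ℕ, 1 ≤ i → 1 ≤ j → ⁅e i, e j⁆ = (cc i j : ℂ) • e (i + j)) :
    ∀ n : ℕ, 3 ≤ n → e n ∈ LieSubalgebra.lieSpan ℂ L {e 1, e 2} := by
  set S := LieSubalgebra.lieSpan ℂ L {e 1, e 2} with hS
  have h1 : e 1 ∈ S := LieSubalgebra.subset_lieSpan (by simp)
  have h2 : e 2 ∈ S := LieSubalgebra.subset_lieSpan (by simp)
  intro n
  induction n using Nat.strong_induction_on with
  | _ n ih =>
    intro hn
    -- key step lemma
    have key : ∀ m k : ℕ, 1 ≤ m → e m ∈ S → (k = 1 ∨ k = 2) → cc m k ≠ 0 →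
        e (m + k) ∈ S := by
      intro m k hm hmS hk hc
      have hk1 : 1 ≤ k := by omega
      have hb := hbr m k hm hk1
      rcases (show cc m k = 1 ∨ cc m k = -1 by unfold cc at hc ⊢; split_ifs at hc ⊢ <;> omega)
        with hcc | hcc
      · rw [hcc] at hb
        have : e (m + k) = ⁅e m, e k⁆ := by rw [hb]; simp
        rw [this]
        exact S.lie_mem hmS (by rcases hk with h | h <;> subst h <;> assumption)
      · rw [hcc] at hb
        have : e (m + k) = -⁅e m, e k⁆ := by rw [hb]; simp
        rw [this]
        exact S.neg_mem (S.lie_mem hmS (by rcases hk with h | h <;> subst h <;> assumption))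
    have cast1 : ∀ m : ℕ, 1 ≤ m → ((m : ℤ) - 1) % 3 = (m - 1 : ℕ) % 3 := by
      intro m hm; omega
    rcases Nat.lt_or_ge n 5 with h5 | h5
    · -- n = 3 or 4
      interval_cases n
      · -- e 3 = e (2+1)
        have := key 2 1 (by omega) h2 (Or.inl rfl) (by decide)
        simpa using this
      · have h3 : e 3 ∈ S := by
          have := key 2 1 (by omega) h2 (Or.inl rfl) (by decide)
          simpa using this
        have := key 3 1 (by omega) h3 (Or.inl rfl) (by decide)
        simpa using this
    · rcases (show n % 3 = 0 ∨ n % 3 = 1 ∨ n % 3 = 2 by omega) with h | h | h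
      · -- e n = key (n-1) 1, cc (n-1) 1 = 1
        have hprev : e (n - 1) ∈ S := ih (n - 1) (by omega) (by omega)
        have := key (n - 1) 1 (by omega) hprev (Or.inl rfl) (by
          unfold cc; split_ifs with a b <;> omega)
        rwa [show n - 1 + 1 = n by omega] at this
      · have hprev : e (n - 1) ∈ S := ih (n - 1) (by omega) (by omega)
        have := key (n - 1) 1 (by omega) hprev (Or.inl rfl) (by
          unfold cc; split_ifs with a b <;> omega)
        rwa [show n - 1 + 1 = n by omega] at this
      · have hprev : e (n - 2) ∈ S := ih (n - 2) (by omega) (by omega)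
        have := key (n - 2) 2 (by omega) hprev (Or.inr rfl) (by
          unfold cc; split_ifs with a b <;> omega)
        rwa [show n - 2 + 2 = n by omega] at this
end

section
/- Let d be a derivation of 𝐧₁ and write d(e₁) = Σ_{i=1}^{3t} α_i e_i. Then the coefficients α_{3k-1} vanish for all 1 ≤ k ≤ t. -/
/-! The relation `⁅e₁, ⁅e₁, e₃⁆⁆ = ⁅e₁, e₄⁆ = 0`, pushed through `d`, gives
`⁅e₁, ⁅e₁, d e₃⁆⁆ = ⁅e₁, ⁅e₃, d e₁⁆⁆ + ⁅e₄, d e₁⁆`. Compare the coefficients of `e_{3k+3}`: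
on the left it is a multiple of `c_{1,3k+1} = 0`, while each term on the right contributes
`-α_{3k-1}`. Hence `2 α_{3k-1} = 0`. -/

theorem cc_eq_zero {i j : ℕ} (h : i % 3 = j % 3) : cc i j = 0 := by
  unfold cc; split_ifs <;> omega

theorem cc_eq_one {i j : ℕ} (h : i % 3 = (j + 1) % 3) : cc i j = 1 := by
  unfold cc; split_ifs <;> omega

theorem cc_eq_neg_one {i j : ℕ} (h : (i + 1) % 3 = j % 3) : cc i j = -1 := by
  unfold cc; split_ifs <;> omega

theorem LieDerivation.lie_lie_apply_eq_of_lie_lie_eq_zero {R L : Type*} [CommRing R]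
    [LieRing L] [LieAlgebra R L] (D : LieDerivation R L L) {x y : L} (h : ⁅x, ⁅x, y⁆⁆ = 0) :
    ⁅x, ⁅x, D y⁆⁆ = ⁅x, ⁅y, D x⁆⁆ + ⁅⁅x, y⁆, D x⁆ := by
  have hD := congrArg D h
  rw [map_zero, apply_lie_eq_sub, apply_lie_eq_sub, lie_sub] at hD
  rw [← sub_eq_zero, ← hD]
  abel

section PositivelyGradedBasis

variable {R L : Type*} [CommRing R] [LieRing L] [LieAlgebra R L]

def Module.Basis.HasStructureConstants (b : Module.Basis {n : ℕ // 0 < n} R L)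
    (c : ℕ → ℕ → R) : Prop :=
  ∀ (i j : ℕ) (hi : 0 < i) (hj : 0 < j),
    ⁅b ⟨i, hi⟩, b ⟨j, hj⟩⁆ = c i j • b ⟨i + j, Nat.add_pos_left hi j⟩

theorem Module.Basis.coord_lie_basis_left (b : Module.Basis {n : ℕ // 0 < n} R L)
    {c : ℕ → ℕ → R} (hbr : b.HasStructureConstants c)
    {i n m : ℕ} (hi : 0 < i) (hn : 0 < n) (hm : 0 < m) (him : i + n = m) (x : L) :
    b.coord ⟨m, hm⟩ ⁅b ⟨i, hi⟩, x⁆ = c i n * b.coord ⟨n, hn⟩ x := by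
  suffices (b.coord ⟨m, hm⟩).comp (LieAlgebra.ad R L (b ⟨i, hi⟩)) =
      c i n • b.coord ⟨n, hn⟩ from LinearMap.congr_fun this x
  refine b.ext fun ⟨j, hj⟩ ↦ ?_
  simp only [LinearMap.comp_apply, LieAlgebra.ad_apply, LinearMap.smul_apply, hbr i j hi hj,
    map_smul, Module.Basis.coord_apply, Module.Basis.repr_self, Finsupp.single_apply,
    Subtype.mk.injEq, smul_eq_mul]
  by_cases hjn : j = n
  · subst hjn; simp [him]
  · simp [hjn, show i + j ≠ m by omega]

theorem Module.Basis.coord_sum_range_smul_basis (b : Module.Basis {n : ℕ // 0 < n} R L)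
    (N : ℕ) (α : ℕ → R) {m : ℕ} (hm : 0 < m) (hmN : m ≤ N) :
    b.coord ⟨m, hm⟩ (∑ i ∈ Finset.range N, α (i + 1) • b ⟨i + 1, i.succ_pos⟩) = α m := by
  rw [map_sum, Finset.sum_eq_single (m - 1)]
  · simp [show m - 1 + 1 = m by omega]
  · intro i _ him
    simp [Subtype.ext_iff, show m ≠ i + 1 by omega]
  · exact fun hm' ↦ absurd (Finset.mem_range.2 (by omega)) hm'

end PositivelyGradedBasis

section StructureConstantsN1

variable {R L : Type*} [CommRing R] [LieRing L] [LieAlgebra R L]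
  (b : Module.Basis {n : ℕ // 0 < n} R L)

theorem lie_e₁_e₃ (hbr : b.HasStructureConstants fun i j ↦ (cc i j : R)) :
    ⁅b ⟨1, one_pos⟩, b ⟨3, three_pos⟩⁆ = b ⟨4, four_pos⟩ := by
  rw [hbr 1 3]
  beta_reduce
  rw [cc_eq_one (by norm_num), Int.cast_one, one_smul]

theorem lie_e₁_lie_e₁_e₃ (hbr : b.HasStructureConstants fun i j ↦ (cc i j : R)) :
    ⁅b ⟨1, one_pos⟩, ⁅b ⟨1, one_pos⟩, b ⟨3, three_pos⟩⁆⁆ = 0 := by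
  rw [lie_e₁_e₃ b hbr, hbr 1 4]
  beta_reduce
  rw [cc_eq_zero (by norm_num), Int.cast_zero, zero_smul]

theorem coord_lie_e₁_lie_e₁_eq_zero (hbr : b.HasStructureConstants fun i j ↦ (cc i j : R))
    (j : ℕ) (y : L) :
    b.coord ⟨3 * j + 6, by positivity⟩ ⁅b ⟨1, one_pos⟩, ⁅b ⟨1, one_pos⟩, y⁆⁆ = 0 := by
  rw [b.coord_lie_basis_left hbr _ (n := 3 * j + 5) (by positivity) _ (by ring),
    b.coord_lie_basis_left hbr _ (n := 3 * j + 4) (by positivity) _ (by ring),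
    cc_eq_zero (i := 1) (j := 3 * j + 4) (by omega)]
  simp

theorem coord_lie_e₁_lie_e₃_eq_neg (hbr : b.HasStructureConstants fun i j ↦ (cc i j : R))
    (j : ℕ) (x : L) :
    b.coord ⟨3 * j + 6, by positivity⟩ ⁅b ⟨1, one_pos⟩, ⁅b ⟨3, three_pos⟩, x⁆⁆ =
      -b.coord ⟨3 * j + 2, by positivity⟩ x := by
  rw [b.coord_lie_basis_left hbr _ (n := 3 * j + 5) (by positivity) _ (by ring),
    b.coord_lie_basis_left hbr _ (n := 3 * j + 2) (by positivity) _ (by ring),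
    cc_eq_neg_one (i := 1) (j := 3 * j + 5) (by omega),
    cc_eq_one (i := 3) (j := 3 * j + 2) (by omega)]
  simp

theorem coord_lie_e₄_eq_neg (hbr : b.HasStructureConstants fun i j ↦ (cc i j : R))
    (j : ℕ) (x : L) :
    b.coord ⟨3 * j + 6, by positivity⟩ ⁅b ⟨4, four_pos⟩, x⁆ =
      -b.coord ⟨3 * j + 2, by positivity⟩ x := by
  rw [b.coord_lie_basis_left hbr _ (n := 3 * j + 2) (by positivity) _ (by ring),
    cc_eq_neg_one (i := 4) (j := 3 * j + 2) (by omega)]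
  simp

end StructureConstantsN1

/-- if `d` is a derivation of `𝐧₁` and `d(e₁) = Σ_{i=1}^{3t} α_i e_i`, then
`α_{3k-1} = 0` for all `1 ≤ k ≤ t`. -/
theorem statement7 (L : Type*) [LieRing L] [LieAlgebra ℂ L]
    (b : Module.Basis {n : ℕ // 0 < n} ℂ L)
    (hbr : ∀ (i j : ℕ) (hi : 0 < i) (hj : 0 < j),
      ⁅b ⟨i, hi⟩, b ⟨j, hj⟩⁆ = (cc i j : ℂ) • b ⟨i + j, by omega⟩)
    (d : LieDerivation ℂ L L) (t : ℕ) (α : ℕ → ℂ)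
    (h : d (b ⟨1, by omega⟩) =
      ∑ i ∈ Finset.range (3 * t), α (i + 1) • b ⟨i + 1, by omega⟩) :
    ∀ k : ℕ, 1 ≤ k → k ≤ t → α (3 * k - 1) = 0 := by
  intro k hk hkt
  obtain ⟨j, rfl⟩ : ∃ j, k = j + 1 := ⟨k - 1, by omega⟩
  rw [show 3 * (j + 1) - 1 = 3 * j + 2 by omega]
  have hα : b.coord ⟨3 * j + 2, by positivity⟩ (d (b ⟨1, one_pos⟩)) = α (3 * j + 2) := by
    rw [h, b.coord_sum_range_smul_basis _ _ _ (by omega)]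
  have hrel := congrArg (b.coord ⟨3 * j + 6, by positivity⟩)
    (d.lie_lie_apply_eq_of_lie_lie_eq_zero (lie_e₁_lie_e₁_e₃ b hbr))
  rw [lie_e₁_e₃ b hbr, map_add, coord_lie_e₁_lie_e₁_eq_zero b hbr,
    coord_lie_e₁_lie_e₃_eq_neg b hbr, coord_lie_e₄_eq_neg b hbr, hα] at hrel
  linear_combination hrel / 2
end

section
/- The center of the Lie algebra R_{𝐧₁}(0) is zero. -/
/- `R_{𝐧₁}(0)` is modelled by a basis `b : ℕ → L` with `x = b 0`, `y = b 1` and `e_n = b (n + 1)`;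
the paper's `e_{3i-2}, e_{3i-1}, e_{3i}` are `b (3i' + 2), b (3i' + 3), b (3i' + 4)` with
`i = i' + 1`. -/

namespace Module.Basis

variable {ι R L : Type*} [CommRing R] [LieRing L] [LieAlgebra R L] (b : Basis ι R L)

theorem repr_lie_apply_of_lie_eq_smul {a : L} (ha : ∀ k, ∃ c : R, ⁅b k, a⁆ = c • b k)
    {j : ι} {d : R} (hj : ⁅b j, a⁆ = d • b j) (z : L) :
    b.repr ⁅z, a⁆ j = d * b.repr z j := by
  classical
  induction (b.mem_span z) using Submodule.span_induction with
  | mem _ hx =>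
    obtain ⟨k, rfl⟩ := hx
    obtain ⟨c, hc⟩ := ha k
    by_cases hkj : k = j
    · subst hkj; simp [hj]
    · simp [hc, hkj]
  | zero => simp
  | add x y _ _ hx hy => simp [add_lie, hx, hy, mul_add]
  | smul r x _ hx => simp [smul_lie, hx, mul_left_comm]

theorem repr_eq_zero_of_lie_eq_zero [NoZeroDivisors R] {a : L}
    (ha : ∀ k, ∃ c : R, ⁅b k, a⁆ = c • b k) {j : ι} {d : R} (hj : ⁅b j, a⁆ = d • b j)
    (hd : d ≠ 0) {z : L} (hz : ⁅z, a⁆ = 0) : b.repr z j = 0 := by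
  have := b.repr_lie_apply_of_lie_eq_smul ha hj z
  rw [hz, map_zero, Finsupp.coe_zero, Pi.zero_apply, eq_comm] at this
  exact (mul_eq_zero.mp this).resolve_left hd

theorem eq_smul_add_smul_of_repr_eq_zero {i j : ι} (hij : i ≠ j) {z : L}
    (hz : ∀ k, k ≠ i → k ≠ j → b.repr z k = 0) :
    z = b.repr z i • b i + b.repr z j • b j := by
  classical
  rw [b.ext_elem_iff]
  intro k
  by_cases hki : k = i
  · subst hki; simp [hij]
  by_cases hkj : k = j
  · subst hkj; simp [Ne.symm hij]
  simp [hz k hki hkj, Ne.symm hki, Ne.symm hkj]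

end Module.Basis

@[elab_as_elim]
theorem Nat.cases_mod_three {P : ℕ → Prop} (h0 : P 0) (h1 : P 1) (h2 : ∀ q, P (3 * q + 2))
    (h3 : ∀ q, P (3 * q + 3)) (h4 : ∀ q, P (3 * q + 4)) (n : ℕ) : P n := by
  obtain rfl | rfl | ⟨q, rfl | rfl | rfl⟩ : n = 0 ∨ n = 1 ∨
      ∃ q, n = 3 * q + 2 ∨ n = 3 * q + 3 ∨ n = 3 * q + 4 := by
    rcases n with _ | _ | m
    exacts [.inl rfl, .inr (.inl rfl), .inr (.inr ⟨m / 3, by omega⟩)]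
  all_goals solve_by_elim

section

variable {L : Type*} [LieRing L] [LieAlgebra ℂ L] (b : Module.Basis ℕ ℂ L)

theorem exists_lie_basis_zero_eq_smul
    (h2 : ∀ i : ℕ, ⁅b (3 * i + 2), b 0⁆ = ((i : ℂ) + 1) • b (3 * i + 2))
    (h3 : ∀ i : ℕ, ⁅b (3 * i + 3), b 0⁆ = (i : ℂ) • b (3 * i + 3))
    (h4 : ∀ i : ℕ, ⁅b (3 * i + 4), b 0⁆ = ((i : ℂ) + 1) • b (3 * i + 4))
    (h8 : ⁅b 0, b 1⁆ = 0) (k : ℕ) : ∃ c : ℂ, ⁅b k, b 0⁆ = c • b k :=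
  Nat.cases_mod_three ⟨0, by simp⟩ ⟨0, by rw [← lie_skew, h8, neg_zero, zero_smul]⟩
    (fun q => ⟨_, h2 q⟩) (fun q => ⟨_, h3 q⟩) (fun q => ⟨_, h4 q⟩) k

theorem exists_lie_basis_one_eq_smul
    (h5 : ∀ i : ℕ, ⁅b (3 * i + 2), b 1⁆ = -b (3 * i + 2))
    (h6 : ∀ i : ℕ, ⁅b (3 * i + 3), b 1⁆ = b (3 * i + 3))
    (h7 : ∀ i : ℕ, ⁅b (3 * i + 4), b 1⁆ = 0)
    (h8 : ⁅b 0, b 1⁆ = 0) (k : ℕ) : ∃ c : ℂ, ⁅b k, b 1⁆ = c • b k :=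
  Nat.cases_mod_three ⟨0, by rw [h8, zero_smul]⟩ ⟨0, by simp⟩
    (fun q => ⟨-1, by rw [h5 q, neg_one_smul]⟩) (fun q => ⟨1, by rw [h6 q, one_smul]⟩)
    (fun q => ⟨0, by rw [h7 q, zero_smul]⟩) k

end

theorem statement13_general (L : Type*) [LieRing L] [LieAlgebra ℂ L] (b : Module.Basis ℕ ℂ L)
    (h2 : ∀ i : ℕ, ⁅b (3 * i + 2), b 0⁆ = ((i : ℂ) + 1) • b (3 * i + 2))
    (h3 : ∀ i : ℕ, ⁅b (3 * i + 3), b 0⁆ = (i : ℂ) • b (3 * i + 3))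
    (h4 : ∀ i : ℕ, ⁅b (3 * i + 4), b 0⁆ = ((i : ℂ) + 1) • b (3 * i + 4))
    (h5 : ∀ i : ℕ, ⁅b (3 * i + 2), b 1⁆ = -b (3 * i + 2))
    (h6 : ∀ i : ℕ, ⁅b (3 * i + 3), b 1⁆ = b (3 * i + 3))
    (h7 : ∀ i : ℕ, ⁅b (3 * i + 4), b 1⁆ = 0)
    (h8 : ⁅b 0, b 1⁆ = 0)
    : LieAlgebra.center ℂ L = ⊥ := by
  rw [LieSubmodule.eq_bot_iff]
  intro z hz
  have lie_z : ∀ a : L, ⁅a, z⁆ = 0 := (LieModule.mem_maxTrivSubmodule ℂ L L z).mp hz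
  have z_lie : ∀ a : L, ⁅z, a⁆ = 0 := fun a => by rw [← lie_skew, lie_z, neg_zero]
  have hx := exists_lie_basis_zero_eq_smul b h2 h3 h4 h8
  have hy := exists_lie_basis_one_eq_smul b h5 h6 h7 h8
  have repr_e : ∀ k, k ≠ 0 → k ≠ 1 → b.repr z k = 0 :=
    Nat.cases_mod_three (by simp) (by simp)
      (fun q _ _ => b.repr_eq_zero_of_lie_eq_zero hx (h2 q) q.cast_add_one_ne_zero (z_lie _))
      (fun q _ _ => b.repr_eq_zero_of_lie_eq_zero hy (by rw [h6 q, one_smul]) one_ne_zero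
        (z_lie _))
      (fun q _ _ => b.repr_eq_zero_of_lie_eq_zero hx (h4 q) q.cast_add_one_ne_zero (z_lie _))
  have z_eq := b.eq_smul_add_smul_of_repr_eq_zero zero_ne_one repr_e
  have repr_y : b.repr z 1 = 0 := by
    have := lie_z (b 3)
    rw [z_eq, lie_add, lie_smul, lie_smul, (by simpa using h3 0 : ⁅b 3, b 0⁆ = 0), h6 0,
      smul_zero, zero_add] at this
    exact (smul_eq_zero.mp this).resolve_right (b.ne_zero _)
  have repr_x : b.repr z 0 = 0 := by
    have := lie_z (b 2)
    rw [z_eq, repr_y, zero_smul, add_zero, lie_smul, h2 0] at this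
    simpa [b.ne_zero] using this
  rw [z_eq, repr_x, repr_y, zero_smul, zero_smul, add_zero]

/-- the center of the Lie algebra `R_{𝐧₁}(0)` is zero. -/
theorem statement13 (L : Type*) [LieRing L] [LieAlgebra ℂ L] (b : Module.Basis ℕ ℂ L)
    (h1 : ∀ i j : ℕ, ⁅b (i + 2), b (j + 2)⁆ = (cc (i + 1) (j + 1) : ℂ) • b (i + j + 3))
    (h2 : ∀ i : ℕ, ⁅b (3 * i + 2), b 0⁆ = ((i : ℂ) + 1) • b (3 * i + 2))
    (h3 : ∀ i : ℕ, ⁅b (3 * i + 3), b 0⁆ = (i : ℂ) • b (3 * i + 3))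
    (h4 : ∀ i : ℕ, ⁅b (3 * i + 4), b 0⁆ = ((i : ℂ) + 1) • b (3 * i + 4))
    (h5 : ∀ i : ℕ, ⁅b (3 * i + 2), b 1⁆ = -b (3 * i + 2))
    (h6 : ∀ i : ℕ, ⁅b (3 * i + 3), b 1⁆ = b (3 * i + 3))
    (h7 : ∀ i : ℕ, ⁅b (3 * i + 4), b 1⁆ = 0)
    (h8 : ⁅b 0, b 1⁆ = 0)
    : LieAlgebra.center ℂ L = ⊥ :=
  statement13_general L b h2 h3 h4 h5 h6 h7 h8
end

section
/- Every derivation of R_{𝐧₁}(0) maps the ideal 𝐧₁ into itself. -/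
theorem Module.Basis.apply_mem_of_forall_apply_basis_mem {ι R M M' : Type*} [Semiring R]
    [AddCommMonoid M] [Module R M] [AddCommMonoid M'] [Module R M'] (b : Module.Basis ι R M)
    {f : M →ₗ[R] M'} {N : Submodule R M'} (h : ∀ i, f (b i) ∈ N) (z : M) : f z ∈ N := by
  have hle : Submodule.span R (Set.range b) ≤ N.comap f :=
    Submodule.span_le.mpr (Set.range_subset_iff.mpr h)
  exact hle (b.span_eq ▸ Submodule.mem_top)

section LieAlgebra

variable {ι R L : Type*} [CommRing R] [LieRing L] [LieAlgebra R L]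

theorem lie_mem_of_forall_lie_basis_mem (b : Module.Basis ι R L) {N : Submodule R L} {q : L}
    (h : ∀ i, ⁅q, b i⁆ ∈ N) (z : L) : ⁅q, z⁆ ∈ N :=
  b.apply_mem_of_forall_apply_basis_mem (f := LieAlgebra.ad R L q) h z

theorem lie_mem_of_forall_basis_lie_mem (b : Module.Basis ι R L) {N : Submodule R L} {q : L}
    (h : ∀ i, ⁅b i, q⁆ ∈ N) (z : L) : ⁅z, q⁆ ∈ N := by
  have hskew : ∀ i, ⁅q, b i⁆ ∈ N := fun i => by
    rw [← lie_skew]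
    exact N.neg_mem (h i)
  rw [← lie_skew]
  exact N.neg_mem (lie_mem_of_forall_lie_basis_mem b hskew z)

theorem LieDerivation.apply_lie_mem (D : LieDerivation R L L) {N : Submodule R L}
    (hN : ∀ n ∈ N, ∀ z : L, ⁅n, z⁆ ∈ N) {n q : L} (hn : n ∈ N) (hq : ∀ z : L, ⁅z, q⁆ ∈ N) :
    D ⁅n, q⁆ ∈ N := by
  rw [D.apply_lie_eq_add]
  exact N.add_mem (hN n hn _) (hq _)

end LieAlgebra

section TailSpan

variable {K L : Type*} [CommRing K] [LieRing L] [LieAlgebra K L] (b : Module.Basis ℕ K L)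

/- With `x = b 0`, `y = b 1` and `e_n = b (n + 1)`, this is the ideal `𝐧₁`; the paper's
`e_{3i-2}, e_{3i-1}, e_{3i}` are `b (3i' + 2), b (3i' + 3), b (3i' + 4)` with `i = i' + 1`. -/
def tailSpan : Submodule K L :=
  Submodule.span K (Set.range fun m : ℕ => b (m + 2))

theorem basis_add_two_mem_tailSpan (m : ℕ) : b (m + 2) ∈ tailSpan b :=
  Submodule.subset_span ⟨m, rfl⟩

theorem basis_lie_basis_zero_mem_tailSpan
    (h2 : ∀ i : ℕ, ⁅b (3 * i + 2), b 0⁆ = ((i : K) + 1) • b (3 * i + 2))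
    (h3 : ∀ i : ℕ, ⁅b (3 * i + 3), b 0⁆ = (i : K) • b (3 * i + 3))
    (h4 : ∀ i : ℕ, ⁅b (3 * i + 4), b 0⁆ = ((i : K) + 1) • b (3 * i + 4))
    (h8 : ⁅b 0, b 1⁆ = 0) : ∀ k, ⁅b k, b 0⁆ ∈ tailSpan b
  | 0 => by simp
  | 1 => by rw [← lie_skew, h8, neg_zero]; exact zero_mem _
  | k + 2 => by
    obtain ⟨i, rfl | rfl | rfl⟩ : ∃ i, k = 3 * i ∨ k = 3 * i + 1 ∨ k = 3 * i + 2 :=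
      ⟨k / 3, by omega⟩
    · rw [h2]
      exact Submodule.smul_mem _ _ (basis_add_two_mem_tailSpan b _)
    · rw [show 3 * i + 1 + 2 = 3 * i + 3 by ring, h3]
      exact Submodule.smul_mem _ _ (basis_add_two_mem_tailSpan b (3 * i + 1))
    · rw [show 3 * i + 2 + 2 = 3 * i + 4 by ring, h4]
      exact Submodule.smul_mem _ _ (basis_add_two_mem_tailSpan b (3 * i + 2))

theorem basis_lie_basis_one_mem_tailSpan
    (h5 : ∀ i : ℕ, ⁅b (3 * i + 2), b 1⁆ = -b (3 * i + 2))
    (h6 : ∀ i : ℕ, ⁅b (3 * i + 3), b 1⁆ = b (3 * i + 3))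
    (h7 : ∀ i : ℕ, ⁅b (3 * i + 4), b 1⁆ = 0)
    (h8 : ⁅b 0, b 1⁆ = 0) : ∀ k, ⁅b k, b 1⁆ ∈ tailSpan b
  | 0 => by rw [h8]; exact zero_mem _
  | 1 => by simp
  | k + 2 => by
    obtain ⟨i, rfl | rfl | rfl⟩ : ∃ i, k = 3 * i ∨ k = 3 * i + 1 ∨ k = 3 * i + 2 :=
      ⟨k / 3, by omega⟩
    · rw [h5]
      exact neg_mem (basis_add_two_mem_tailSpan b _)
    · rw [show 3 * i + 1 + 2 = 3 * i + 3 by ring, h6]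
      exact basis_add_two_mem_tailSpan b (3 * i + 1)
    · rw [show 3 * i + 2 + 2 = 3 * i + 4 by ring, h7]
      exact zero_mem _

theorem lie_mem_tailSpan_of_mem
    (h1 : ∀ i j : ℕ, ⁅b (i + 2), b (j + 2)⁆ = (cc (i + 1) (j + 1) : K) • b (i + j + 3))
    (h2 : ∀ i : ℕ, ⁅b (3 * i + 2), b 0⁆ = ((i : K) + 1) • b (3 * i + 2))
    (h3 : ∀ i : ℕ, ⁅b (3 * i + 3), b 0⁆ = (i : K) • b (3 * i + 3))
    (h4 : ∀ i : ℕ, ⁅b (3 * i + 4), b 0⁆ = ((i : K) + 1) • b (3 * i + 4))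
    (h5 : ∀ i : ℕ, ⁅b (3 * i + 2), b 1⁆ = -b (3 * i + 2))
    (h6 : ∀ i : ℕ, ⁅b (3 * i + 3), b 1⁆ = b (3 * i + 3))
    (h7 : ∀ i : ℕ, ⁅b (3 * i + 4), b 1⁆ = 0)
    (h8 : ⁅b 0, b 1⁆ = 0) (n : L) (hn : n ∈ tailSpan b) (z : L) : ⁅n, z⁆ ∈ tailSpan b := by
  have hbasis : ∀ k j, ⁅b (k + 2), b j⁆ ∈ tailSpan b
    | k, 0 => basis_lie_basis_zero_mem_tailSpan b h2 h3 h4 h8 (k + 2)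
    | k, 1 => basis_lie_basis_one_mem_tailSpan b h5 h6 h7 h8 (k + 2)
    | k, j + 2 => by
      rw [h1]
      exact Submodule.smul_mem _ _ (basis_add_two_mem_tailSpan b (k + j + 1))
  induction hn using Submodule.span_induction with
  | mem x hx =>
    obtain ⟨k, rfl⟩ := hx
    exact lie_mem_of_forall_lie_basis_mem b (hbasis k) z
  | zero => simp
  | add x y _ _ hx hy => rw [add_lie]; exact add_mem hx hy
  | smul c x _ hx => rw [smul_lie]; exact Submodule.smul_mem _ c hx

end TailSpan

/-- every derivation of `R_{𝐧₁}(0)` maps the ideal `𝐧₁` into itself. -/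
theorem statement14 (L : Type*) [LieRing L] [LieAlgebra ℂ L] (b : Module.Basis ℕ ℂ L)
    (h1 : ∀ i j : ℕ, ⁅b (i + 2), b (j + 2)⁆ = (cc (i + 1) (j + 1) : ℂ) • b (i + j + 3))
    (h2 : ∀ i : ℕ, ⁅b (3 * i + 2), b 0⁆ = ((i : ℂ) + 1) • b (3 * i + 2))
    (h3 : ∀ i : ℕ, ⁅b (3 * i + 3), b 0⁆ = (i : ℂ) • b (3 * i + 3))
    (h4 : ∀ i : ℕ, ⁅b (3 * i + 4), b 0⁆ = ((i : ℂ) + 1) • b (3 * i + 4))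
    (h5 : ∀ i : ℕ, ⁅b (3 * i + 2), b 1⁆ = -b (3 * i + 2))
    (h6 : ∀ i : ℕ, ⁅b (3 * i + 3), b 1⁆ = b (3 * i + 3))
    (h7 : ∀ i : ℕ, ⁅b (3 * i + 4), b 1⁆ = 0)
    (h8 : ⁅b 0, b 1⁆ = 0)
    (d : LieDerivation ℂ L L) :
    ∀ n : ℕ, d (b (n + 2)) ∈ Submodule.span ℂ (Set.range fun m : ℕ => b (m + 2)) := by
  have hideal := lie_mem_tailSpan_of_mem b h1 h2 h3 h4 h5 h6 h7 h8
  have hx : ∀ z : L, ⁅z, b 0⁆ ∈ tailSpan b :=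
    lie_mem_of_forall_basis_lie_mem b (basis_lie_basis_zero_mem_tailSpan b h2 h3 h4 h8)
  have hy : ∀ z : L, ⁅z, b 1⁆ ∈ tailSpan b :=
    lie_mem_of_forall_basis_lie_mem b (basis_lie_basis_one_mem_tailSpan b h5 h6 h7 h8)
  intro n
  obtain ⟨i, rfl | rfl | rfl⟩ : ∃ i, n = 3 * i ∨ n = 3 * i + 1 ∨ n = 3 * i + 2 :=
    ⟨n / 3, by omega⟩
  · rw [← Submodule.smul_mem_iff _ (Nat.cast_add_one_ne_zero (R := ℂ) i), ← map_smul, ← h2]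
    exact d.apply_lie_mem hideal (basis_add_two_mem_tailSpan b _) hx
  · rw [show 3 * i + 1 + 2 = 3 * i + 3 by ring, ← h6]
    exact d.apply_lie_mem hideal (basis_add_two_mem_tailSpan b (3 * i + 1)) hy
  · rw [show 3 * i + 2 + 2 = 3 * i + 4 by ring,
      ← Submodule.smul_mem_iff _ (Nat.cast_add_one_ne_zero (R := ℂ) i), ← map_smul, ← h4]
    exact d.apply_lie_mem hideal (basis_add_two_mem_tailSpan b (3 * i + 2)) hx
end

section
/- Every derivation of the Lie algebra R_{𝐧₁}(0) is inner; together with the triviality of the center, R_{𝐧₁}(0) is a complete Lie algebra, i.e., H¹(R_{𝐧₁}(0), R_{𝐧₁}(0)) = 0 and Center = 0. -/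
namespace Module.Basis

variable {R M ι : Type*} [CommRing R] [AddCommGroup M] [Module R M] (b : Basis ι R M)

theorem eq_sum_of_repr_eq_zero {w : M} (s : Finset ι) (hw : ∀ m ∉ s, b.repr w m = 0) :
    w = ∑ m ∈ s, b.repr w m • b m := by
  conv_lhs => rw [← b.linearCombination_repr w]
  refine Finsupp.linearCombination_apply_of_mem_supported R fun m hm => ?_
  by_contra hms
  exact (Finsupp.mem_support_iff.mp hm) (hw m hms)

theorem repr_apply_of_apply_eq_smul {T : M →ₗ[R] M} {f : ι → R} (hT : ∀ k, T (b k) = f k • b k)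
    (w : M) (k : ι) : b.repr (T w) k = f k * b.repr w k := by
  classical
  have hcoord : (b.coord k).comp T = f k • b.coord k := b.ext fun m => by
    by_cases h : m = k <;> simp [hT, h]
  simpa using LinearMap.congr_fun hcoord w

end Module.Basis

section DiagonalAction

open Module

variable {K L ι : Type*} [Field K] [LieRing L] [LieAlgebra K L] {b : Basis ι K L} {x : L}
  {f : ι → K}

theorem Module.Basis.repr_lie_of_lie_eq_smul (hx : ∀ k, ⁅b k, x⁆ = f k • b k) (w : L) (k : ι) :
    b.repr ⁅w, x⁆ k = f k * b.repr w k := by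
  have hT : ∀ k, (-LieAlgebra.ad K L x) (b k) = f k • b k := fun k => by
    simp [← hx k]
  simpa using b.repr_apply_of_apply_eq_smul hT w k

theorem Module.Basis.repr_eq_zero_of_lie_eq_smul (hx : ∀ k, ⁅b k, x⁆ = f k • b k) {w : L} {c : K}
    (hw : ⁅w, x⁆ = c • w) {m : ι} (hm : f m ≠ c) : b.repr w m = 0 := by
  have h := b.repr_lie_of_lie_eq_smul hx w m
  rw [hw, map_smul, Finsupp.smul_apply, smul_eq_mul] at h
  by_contra hr
  exact hm (mul_right_cancel₀ hr h).symm

theorem LieDerivation.lie_apply_eq_smul (D : LieDerivation K L L) (hD : D x = 0) {v : L} {c : K}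
    (hv : ⁅v, x⁆ = c • v) : ⁅D v, x⁆ = c • D v := by
  have h := D.apply_lie_eq_add v x
  rwa [hv, hD, lie_zero, zero_add, map_smul, eq_comm] at h

theorem Module.Basis.repr_lie_apply_self_eq_zero (hx : ∀ k, ⁅b k, x⁆ = f k • b k)
    (D : LieDerivation K L L) (k : ι) : b.repr ⁅b k, D x⁆ k = 0 := by
  have h := congrArg (fun w => b.repr w k) (D.apply_lie_eq_add (b k) x)
  simp only [hx k, map_smul, map_add, Finsupp.smul_apply, Finsupp.add_apply, smul_eq_mul,
    b.repr_lie_of_lie_eq_smul hx] at h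
  linear_combination -h

theorem Module.Basis.exists_repr_apply_sub_lie_eq_zero {y : L} {g : ι → K}
    (hx : ∀ k, ⁅b k, x⁆ = f k • b k) (hy : ∀ k, ⁅b k, y⁆ = g k • b k) (hxy : ⁅x, y⁆ = 0)
    (D : LieDerivation K L L) :
    ∃ a : L, ∀ m, f m ≠ 0 ∨ g m ≠ 0 →
      b.repr (D x - ⁅a, x⁆) m = 0 ∧ b.repr (D y - ⁅a, y⁆) m = 0 := by
  classical
  have hweight : ∀ m, g m * b.repr (D x) m = f m * b.repr (D y) m := fun m => by
    have h := D.apply_lie_eq_add x y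
    rw [hxy, map_zero, ← lie_skew x (D y)] at h
    have h' := congrArg (fun w => b.repr w m) h
    simp only [map_zero, map_add, map_neg, Finsupp.add_apply, Finsupp.neg_apply,
      b.repr_lie_of_lie_eq_smul hx, b.repr_lie_of_lie_eq_smul hy, Finsupp.coe_zero,
      Pi.zero_apply] at h'
    linear_combination -h'
  -- `a` has coordinates `α m / f m`, or `β m / g m` where `f m = 0`, writing `α`, `β` for
  -- the coordinates of `D x`, `D y`; `hweight` says `g α = f β`, so both choices fit.
  let u : ι → K := fun k => (f k)⁻¹
  let v : ι → K := fun k => if f k = 0 then (g k)⁻¹ else 0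
  let a := b.constr K (fun k => u k • b k) (D x) + b.constr K (fun k => v k • b k) (D y)
  have ha : ∀ m, b.repr a m = u m * b.repr (D x) m + v m * b.repr (D y) m := fun m => by
    simp only [a, map_add, Finsupp.add_apply,
      b.repr_apply_of_apply_eq_smul (b.constr_basis K _)]
  refine ⟨a, fun m hm => ?_⟩
  simp only [map_sub, Finsupp.sub_apply, b.repr_lie_of_lie_eq_smul hx,
    b.repr_lie_of_lie_eq_smul hy, ha, u, v, sub_eq_zero]
  by_cases hf : f m = 0
  · have hg : g m ≠ 0 := hm.resolve_left (not_not.mpr hf)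
    have hα : b.repr (D x) m = 0 := by simpa [hf, hg] using hweight m
    simp [hf, hg, hα]
  · have hβ : b.repr (D y) m = g m * b.repr (D x) m / f m := by
      rw [hweight m]; field_simp
    simp only [hf, if_false, zero_mul, add_zero, hβ]
    constructor <;> field_simp

end DiagonalAction

theorem cc_ne_zero {i j : ℕ} (h : i % 3 ≠ j % 3) : cc i j ≠ 0 := by
  unfold cc; split_ifs <;> omega

namespace Rn1

open Module

/- With `x = b 0`, `y = b 1` and `e_n = b (n + 1)`, the basis vector `b k` is a common
eigenvector of `⁅·, x⁆` and `⁅·, y⁆` with eigenvalues `weightX k` and `weightY k`. -/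
def weightX (k : ℕ) : ℤ := if k < 2 then 0 else if k % 3 = 0 then k / 3 - 1 else (k + 1) / 3

def weightY (k : ℕ) : ℤ :=
  if k < 2 then 0 else if k % 3 = 2 then -1 else if k % 3 = 0 then 1 else 0

theorem eq_of_weight_eq {k m : ℕ} (hk : 2 ≤ k) (hX : weightX m = weightX k)
    (hY : weightY m = weightY k) : m = k := by
  simp only [weightX, weightY] at hX hY; split_ifs at hX hY <;> omega

theorem weight_ne_zero {k : ℕ} (hk : 2 ≤ k) : weightX k ≠ 0 ∨ weightY k ≠ 0 := by
  by_contra! h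
  have := eq_of_weight_eq (m := 0) hk h.1.symm h.2.symm
  omega

variable {K L : Type*} [Field K] [LieRing L] [LieAlgebra K L] {b : Basis ℕ K L}

theorem lie_basis_zero
    (h2 : ∀ i : ℕ, ⁅b (3 * i + 2), b 0⁆ = ((i : K) + 1) • b (3 * i + 2))
    (h3 : ∀ i : ℕ, ⁅b (3 * i + 3), b 0⁆ = (i : K) • b (3 * i + 3))
    (h4 : ∀ i : ℕ, ⁅b (3 * i + 4), b 0⁆ = ((i : K) + 1) • b (3 * i + 4))
    (h8 : ⁅b 0, b 1⁆ = 0) (k : ℕ) : ⁅b k, b 0⁆ = (weightX k : K) • b k := by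
  obtain hk | ⟨i, rfl | rfl | rfl⟩ : k < 2 ∨ ∃ i, k = 3 * i + 2 ∨ k = 3 * i + 3 ∨ k = 3 * i + 4 :=
    by by_cases hk : k < 2; exacts [.inl hk, .inr ⟨(k - 2) / 3, by omega⟩]
  · interval_cases k
    · simp [weightX]
    · rw [← lie_skew, h8]; simp [weightX]
  · rw [h2, show weightX (3 * i + 2) = i + 1 by unfold weightX; split_ifs <;> omega]
    push_cast; rfl
  · rw [h3, show weightX (3 * i + 3) = i by unfold weightX; split_ifs <;> omega]
    push_cast; rfl
  · rw [h4, show weightX (3 * i + 4) = i + 1 by unfold weightX; split_ifs <;> omega]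
    push_cast; rfl

theorem lie_basis_one
    (h5 : ∀ i : ℕ, ⁅b (3 * i + 2), b 1⁆ = -b (3 * i + 2))
    (h6 : ∀ i : ℕ, ⁅b (3 * i + 3), b 1⁆ = b (3 * i + 3))
    (h7 : ∀ i : ℕ, ⁅b (3 * i + 4), b 1⁆ = 0)
    (h8 : ⁅b 0, b 1⁆ = 0) (k : ℕ) : ⁅b k, b 1⁆ = (weightY k : K) • b k := by
  obtain hk | ⟨i, rfl | rfl | rfl⟩ : k < 2 ∨ ∃ i, k = 3 * i + 2 ∨ k = 3 * i + 3 ∨ k = 3 * i + 4 :=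
    by by_cases hk : k < 2; exacts [.inl hk, .inr ⟨(k - 2) / 3, by omega⟩]
  · interval_cases k <;> simp [weightY, h8]
  · rw [h5, show weightY (3 * i + 2) = -1 by unfold weightY; split_ifs <;> omega]
    simp
  · rw [h6, show weightY (3 * i + 3) = 1 by unfold weightY; split_ifs <;> omega]
    simp
  · rw [h7, show weightY (3 * i + 4) = 0 by unfold weightY; split_ifs <;> omega]
    simp

theorem eq_smul_basis_zero_add_smul_basis_one {w : L} (hw : ∀ m, 2 ≤ m → b.repr w m = 0) :
    w = b.repr w 0 • b 0 + b.repr w 1 • b 1 := by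
  simpa using b.eq_sum_of_repr_eq_zero {0, 1} fun m hm => hw m (by simp at hm; omega)

theorem lie_basis_smul_add_smul (hx : ∀ k, ⁅b k, b 0⁆ = (weightX k : K) • b k)
    (hy : ∀ k, ⁅b k, b 1⁆ = (weightY k : K) • b k) (k : ℕ) (r s : K) :
    ⁅b k, r • b 0 + s • b 1⁆ = (r * weightX k + s * weightY k) • b k := by
  rw [lie_add, lie_smul, lie_smul, hx, hy]; module

theorem eq_zero_of_repr_lie_basis_self_eq_zero (hx : ∀ k, ⁅b k, b 0⁆ = (weightX k : K) • b k)
    (hy : ∀ k, ⁅b k, b 1⁆ = (weightY k : K) • b k) {w : L} (hw : ∀ m, 2 ≤ m → b.repr w m = 0)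
    (h2 : b.repr ⁅b 2, w⁆ 2 = 0) (h3 : b.repr ⁅b 3, w⁆ 3 = 0) : w = 0 := by
  have hw' := eq_smul_basis_zero_add_smul_basis_one hw
  set r := b.repr w 0
  set s := b.repr w 1
  rw [hw', lie_basis_smul_add_smul hx hy] at h2 h3
  have hs : s = 0 := by simpa [weightX, weightY] using h3
  have hr : r = 0 := by simpa [weightX, weightY, hs] using h2
  rw [hw', hr, hs, zero_smul, zero_smul, add_zero]

theorem center_eq_bot [CharZero K] (hx : ∀ k, ⁅b k, b 0⁆ = (weightX k : K) • b k)
    (hy : ∀ k, ⁅b k, b 1⁆ = (weightY k : K) • b k) : LieAlgebra.center K L = ⊥ := by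
  refine (LieSubmodule.eq_bot_iff _).mpr fun z hz => ?_
  rw [LieAlgebra.center, LieModule.mem_maxTrivSubmodule] at hz
  have hz' : ∀ w, ⁅z, w⁆ = (0 : K) • z := fun w => by rw [← lie_skew, hz, neg_zero, zero_smul]
  refine eq_zero_of_repr_lie_basis_self_eq_zero hx hy (fun m hm => ?_) (by simp [hz])
    (by simp [hz])
  rcases weight_ne_zero hm with h | h
  · exact b.repr_eq_zero_of_lie_eq_smul hx (hz' _) (by exact_mod_cast h)
  · exact b.repr_eq_zero_of_lie_eq_smul hy (hz' _) (by exact_mod_cast h)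

theorem apply_basis_zero_one_eq_zero (hx : ∀ k, ⁅b k, b 0⁆ = (weightX k : K) • b k)
    (hy : ∀ k, ⁅b k, b 1⁆ = (weightY k : K) • b k) (D : LieDerivation K L L)
    (h0 : ∀ m, 2 ≤ m → b.repr (D (b 0)) m = 0) (h1 : ∀ m, 2 ≤ m → b.repr (D (b 1)) m = 0) :
    D (b 0) = 0 ∧ D (b 1) = 0 :=
  ⟨eq_zero_of_repr_lie_basis_self_eq_zero hx hy h0 (b.repr_lie_apply_self_eq_zero hx D 2)
    (b.repr_lie_apply_self_eq_zero hx D 3),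
   eq_zero_of_repr_lie_basis_self_eq_zero hx hy h1 (b.repr_lie_apply_self_eq_zero hy D 2)
    (b.repr_lie_apply_self_eq_zero hy D 3)⟩

theorem apply_basis_eq_zero_of_apply_two_three [CharZero K]
    (he : ∀ i j : ℕ, ⁅b (i + 2), b (j + 2)⁆ = (cc (i + 1) (j + 1) : K) • b (i + j + 3))
    (D : LieDerivation K L L) (h2 : D (b 2) = 0) (h3 : D (b 3) = 0) {k : ℕ} (hk : 2 ≤ k) :
    D (b k) = 0 := by
  induction k using Nat.strong_induction_on with
  | _ k ih =>
  obtain rfl | rfl | hk4 : k = 2 ∨ k = 3 ∨ 4 ≤ k := by omega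
  · exact h2
  · exact h3
  obtain ⟨i, hi, j, rfl, hc⟩ : ∃ i < 2, ∃ j, k = i + j + 3 ∧ cc (i + 1) (j + 1) ≠ 0 := by
    by_cases h : k % 3 = 0
    · exact ⟨1, by omega, k - 4, by omega, cc_ne_zero (by omega)⟩
    · exact ⟨0, by omega, k - 3, by omega, cc_ne_zero (by omega)⟩
  have hi2 : D (b (i + 2)) = 0 := by interval_cases i; exacts [h2, h3]
  have hj2 : D (b (j + 2)) = 0 := ih _ (by omega) (by omega)
  have h := D.apply_lie_eq_add (b (i + 2)) (b (j + 2))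
  rw [he, hi2, hj2, lie_zero, zero_lie, add_zero, map_smul] at h
  exact (smul_eq_zero.mp h).resolve_left (by exact_mod_cast hc)

theorem apply_basis_eq_smul [CharZero K]
    (hx : ∀ k, ⁅b k, b 0⁆ = (weightX k : K) • b k) (hy : ∀ k, ⁅b k, b 1⁆ = (weightY k : K) • b k)
    (D : LieDerivation K L L) (h0 : D (b 0) = 0) (h1 : D (b 1) = 0) {k : ℕ} (hk : 2 ≤ k) :
    D (b k) = b.repr (D (b k)) k • b k := by
  simpa using b.eq_sum_of_repr_eq_zero {k} fun m hm => by
    by_contra hr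
    have hX : (weightX m : K) = weightX k := by_contra fun h =>
      hr (b.repr_eq_zero_of_lie_eq_smul hx (D.lie_apply_eq_smul h0 (hx k)) h)
    have hY : (weightY m : K) = weightY k := by_contra fun h =>
      hr (b.repr_eq_zero_of_lie_eq_smul hy (D.lie_apply_eq_smul h1 (hy k)) h)
    exact hm (Finset.mem_singleton.mpr
      (eq_of_weight_eq hk (by exact_mod_cast hX) (by exact_mod_cast hY)))

theorem exists_eq_lie_of_apply_basis_zero_one [CharZero K]
    (hx : ∀ k, ⁅b k, b 0⁆ = (weightX k : K) • b k) (hy : ∀ k, ⁅b k, b 1⁆ = (weightY k : K) • b k)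
    (he : ∀ i j : ℕ, ⁅b (i + 2), b (j + 2)⁆ = (cc (i + 1) (j + 1) : K) • b (i + j + 3))
    (D : LieDerivation K L L) (h0 : D (b 0) = 0) (h1 : D (b 1) = 0) :
    ∃ t : L, ∀ w, D w = ⁅t, w⁆ := by
  set c₂ := b.repr (D (b 2)) 2
  set c₃ := b.repr (D (b 3)) 3
  have hD2 : D (b 2) = c₂ • b 2 := apply_basis_eq_smul hx hy D h0 h1 le_rfl
  have hD3 : D (b 3) = c₃ • b 3 := apply_basis_eq_smul hx hy D h0 h1 (by norm_num)
  -- chosen so that `ad t` agrees with `D` on `b 0`, `b 1`, `b 2` and `b 3`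
  set t := (-(c₂ + c₃)) • b 0 + (-c₃) • b 1
  have ht : ∀ k, ⁅t, b k⁆ = ((c₂ + c₃) * weightX k + c₃ * weightY k) • b k := fun k => by
    rw [← lie_skew, lie_basis_smul_add_smul hx hy, ← neg_smul]
    ring_nf
  set F := D - LieDerivation.ad K L t
  have hF : ∀ k, F (b k) = D (b k) - ⁅t, b k⁆ := by simp [F]
  have hF2 : F (b 2) = 0 := by rw [hF, hD2, ht]; simp [weightX, weightY]
  have hF3 : F (b 3) = 0 := by rw [hF, hD3, ht]; simp [weightX, weightY]
  have hF0 : (F : L →ₗ[K] L) = 0 := b.ext fun k => by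
    obtain hk | hk := lt_or_ge k 2
    · interval_cases k <;> simp [hF, h0, h1, ht, weightX, weightY]
    · simpa using apply_basis_eq_zero_of_apply_two_three he F hF2 hF3 hk
  refine ⟨t, fun w => ?_⟩
  simpa [F, sub_eq_zero] using LinearMap.congr_fun hF0 w

theorem exists_eq_lie [CharZero K]
    (hx : ∀ k, ⁅b k, b 0⁆ = (weightX k : K) • b k) (hy : ∀ k, ⁅b k, b 1⁆ = (weightY k : K) • b k)
    (he : ∀ i j : ℕ, ⁅b (i + 2), b (j + 2)⁆ = (cc (i + 1) (j + 1) : K) • b (i + j + 3))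
    (d : LieDerivation K L L) : ∃ a : L, ∀ w, d w = ⁅a, w⁆ := by
  obtain ⟨a, ha⟩ := b.exists_repr_apply_sub_lie_eq_zero hx hy (by simpa [weightY] using hy 0) d
  have ha' := fun m (hm : 2 ≤ m) => ha m (by exact_mod_cast weight_ne_zero hm)
  set E := d - LieDerivation.ad K L a
  have hE : ∀ w, E w = d w - ⁅a, w⁆ := by simp [E]
  obtain ⟨hE0, hE1⟩ := apply_basis_zero_one_eq_zero hx hy E
    (fun m hm => by rw [hE]; exact (ha' m hm).1) (fun m hm => by rw [hE]; exact (ha' m hm).2)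
  obtain ⟨t, ht⟩ := exists_eq_lie_of_apply_basis_zero_one hx hy he E hE0 hE1
  exact ⟨a + t, fun w => by rw [add_lie, ← ht, hE]; abel⟩

end Rn1

/-- every derivation of `R_{𝐧₁}(0)` is inner and its center is zero, i.e.
`R_{𝐧₁}(0)` is a complete Lie algebra (`H¹(R_{𝐧₁}(0), R_{𝐧₁}(0)) = 0` and trivial center). -/
theorem statement15 (L : Type*) [LieRing L] [LieAlgebra ℂ L] (b : Module.Basis ℕ ℂ L)
    (h1 : ∀ i j : ℕ, ⁅b (i + 2), b (j + 2)⁆ = (cc (i + 1) (j + 1) : ℂ) • b (i + j + 3))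
    (h2 : ∀ i : ℕ, ⁅b (3 * i + 2), b 0⁆ = ((i : ℂ) + 1) • b (3 * i + 2))
    (h3 : ∀ i : ℕ, ⁅b (3 * i + 3), b 0⁆ = (i : ℂ) • b (3 * i + 3))
    (h4 : ∀ i : ℕ, ⁅b (3 * i + 4), b 0⁆ = ((i : ℂ) + 1) • b (3 * i + 4))
    (h5 : ∀ i : ℕ, ⁅b (3 * i + 2), b 1⁆ = -b (3 * i + 2))
    (h6 : ∀ i : ℕ, ⁅b (3 * i + 3), b 1⁆ = b (3 * i + 3))
    (h7 : ∀ i : ℕ, ⁅b (3 * i + 4), b 1⁆ = 0)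
    (h8 : ⁅b 0, b 1⁆ = 0)
    : LieAlgebra.center ℂ L = ⊥ ∧
      ∀ d : LieDerivation ℂ L L, ∃ a : L, ∀ w : L, d w = ⁅a, w⁆ := by
  have hx := Rn1.lie_basis_zero h2 h3 h4 h8
  have hy := Rn1.lie_basis_one h5 h6 h7 h8
  exact ⟨Rn1.center_eq_bot hx hy, Rn1.exists_eq_lie hx hy h1⟩
end

section
/- The Lie algebra L with basis {x, y, e₁, e₂, ...} and nonzero brackets [e_i,e₁] = e_{i+1} (i ≥ 2), [x,e₁] = e₁, [x,e_i] = (i-1)e_i (i ≥ 2), [y,e_i] = e_i (i ≥ 2) satisfies the Jacobi identity, and is potentially solvable but not potentially nilpotent: ⋂_{s≥1} L^{[s]} = 0 while ⋂_{k≥1} L^k ≠ 0. -/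
/-- The free `ℂ`-vector space on `{e_i : i ≥ 1}`. -/
abbrev ESpace := {n : ℕ // 0 < n} →₀ ℂ

/-- The bracket among the `e_i`: `[e_i,e₁] = e_{i+1}` for `i ≥ 2`, all other brackets of
the `e`'s zero, extended antisymmetrically and bilinearly. -/
noncomputable def ebr (f g : ESpace) : ESpace :=
  f.sum fun i a => g.sum fun j c =>
    (a * c) •
      (if j.1 = 1 ∧ 2 ≤ i.1 then Finsupp.single ⟨i.1 + 1, by omega⟩ (1 : ℂ)
       else if i.1 = 1 ∧ 2 ≤ j.1 then -Finsupp.single ⟨j.1 + 1, by omega⟩ (1 : ℂ)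
       else 0)

/-- The action `f ↦ [x, f]`: `[x,e₁] = e₁`, `[x,e_i] = (i-1)e_i` for `i ≥ 2`. -/
noncomputable def Xact (f : ESpace) : ESpace :=
  f.sum fun i a =>
    (a * (if i.1 = 1 then 1 else (i.1 : ℂ) - 1)) • Finsupp.single i (1 : ℂ)

/-- The action `f ↦ [y, f]`: `[y,e_i] = e_i` for `i ≥ 2`, `[y,e₁] = 0`. -/
noncomputable def Yact (f : ESpace) : ESpace :=
  f.sum fun i a => (a * (if i.1 = 1 then 0 else 1)) • Finsupp.single i (1 : ℂ)

/-- The underlying space of `L = ℂx ⊕ ℂy ⊕ span{e₁,e₂,...}`: `(a,b,f) = a·x + b·y + f`. -/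
abbrev LSpace := ℂ × ℂ × ESpace

/-- The bracket of `L` (with `[x,y] = 0`). -/
noncomputable def lbr (p q : LSpace) : LSpace :=
  (0, 0, ebr p.2.2 q.2.2 + p.1 • Xact q.2.2 + p.2.1 • Yact q.2.2
    - q.1 • Xact p.2.2 - q.2.1 • Yact p.2.2)

/-- The derived series: `dser 0 = L^{[1]} = L`, `dser s = L^{[s+1]} = [L^{[s]}, L^{[s]}]`. -/
noncomputable def dser : ℕ → Submodule ℂ LSpace
  | 0 => ⊤
  | s + 1 => Submodule.span ℂ {w | ∃ u v, u ∈ dser s ∧ v ∈ dser s ∧ w = lbr u v}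

/-- The lower central series: `lcs 0 = L¹ = L`, `lcs k = L^{k+1} = [L^k, L]`. -/
noncomputable def lcs : ℕ → Submodule ℂ LSpace
  | 0 => ⊤
  | k + 1 => Submodule.span ℂ {w | ∃ u v, u ∈ lcs k ∧ w = lbr u v}

/-!
Write `φ` for the coefficient of `e₁` and `S` for the shift `e₁ ↦ 0`, `e_i ↦ e_{i+1}` (`i ≥ 2`).
The bracket of `E = span{e₁, e₂, ...}` is `[f, g] = φ(g) S f - φ(f) S g`, and `φ ∘ S = 0`
makes its Jacobi identity a short computation. `ad x` and `ad y` act diagonally on the `e_i`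
with weights additive along `S`, so they are commuting derivations of `E` and `L = ℂ² ⋉ E`
is a Lie algebra.

Since `[L, L] ⊆ E`, `[E, E] ⊆ ker φ` and the bracket vanishes on `ker φ`, `L^{[4]} = 0`.
On the other hand `[e₂, -y] = e₂`, so `e₂` lies in every term of the lower central series.
-/

namespace LinearMap

variable {R M : Type*} [CommRing R] [AddCommGroup M] [Module R M]

def shiftBracket (φ : M →ₗ[R] R) (S : M →ₗ[R] M) : M →ₗ[R] M →ₗ[R] M :=
  LinearMap.mk₂ R (fun f g => φ g • S f - φ f • S g)
    (fun _ _ _ => by simp only [map_add, add_smul, smul_add]; abel)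
    (fun _ _ _ => by simp only [map_smul, smul_eq_mul, mul_smul, smul_comm (φ _), smul_sub])
    (fun _ _ _ => by simp only [map_add, add_smul, smul_add]; abel)
    (fun _ _ _ => by simp only [map_smul, smul_eq_mul, mul_smul, smul_comm (φ _), smul_sub])

variable {φ : M →ₗ[R] R} {S : M →ₗ[R] M}

theorem shiftBracket_apply (f g : M) : shiftBracket φ S f g = φ g • S f - φ f • S g := rfl

theorem apply_shiftBracket (hφS : ∀ m, φ (S m) = 0) (f g : M) :
    φ (shiftBracket φ S f g) = 0 := by
  simp only [shiftBracket_apply, map_sub, map_smul, hφS, smul_zero, sub_zero]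

theorem shiftBracket_eq_zero {f g : M} (hf : φ f = 0) (hg : φ g = 0) :
    shiftBracket φ S f g = 0 := by
  simp only [shiftBracket_apply, hf, hg, zero_smul, sub_zero]

theorem shiftBracket_jacobi (hφS : ∀ m, φ (S m) = 0) (f g k : M) :
    shiftBracket φ S f (shiftBracket φ S g k) + shiftBracket φ S g (shiftBracket φ S k f)
      + shiftBracket φ S k (shiftBracket φ S f g) = 0 := by
  simp only [shiftBracket_apply, map_sub, map_smul, hφS]
  module

theorem apply_shiftBracket_of_commutator {D : M →ₗ[R] M} {c : R}
    (hφD : ∀ m, φ (D m) = c * φ m) (hDS : ∀ m, D (S m) = S (D m) + c • S m) (f g : M) :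
    D (shiftBracket φ S f g) = shiftBracket φ S f (D g) - shiftBracket φ S g (D f) := by
  simp only [shiftBracket_apply, map_sub, map_smul, hφD, hDS]
  module

end LinearMap

abbrev Idx := {n : ℕ // 0 < n}

noncomputable def eOneCoeff : ESpace →ₗ[ℂ] ℂ := Finsupp.lapply ⟨1, one_pos⟩

noncomputable def eShift : ESpace →ₗ[ℂ] ESpace :=
  Finsupp.lsum ℂ fun i => LinearMap.toSpanSingleton ℂ _
    (if i.1 = 1 then 0 else Finsupp.single ⟨i.1 + 1, i.1.succ_pos⟩ 1)

noncomputable def diagₗ (w : Idx → ℂ) : ESpace →ₗ[ℂ] ESpace :=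
  Finsupp.lsum ℂ fun i => LinearMap.toSpanSingleton ℂ _ (w i • Finsupp.single i 1)

theorem eOneCoeff_single (i : Idx) (a : ℂ) :
    eOneCoeff (Finsupp.single i a) = if i.1 = 1 then a else 0 := by
  rw [eOneCoeff, Finsupp.lapply_apply, Finsupp.single_apply]
  simp only [Subtype.ext_iff]

theorem eShift_single (i : Idx) (a : ℂ) :
    eShift (Finsupp.single i a) =
      if i.1 = 1 then 0 else Finsupp.single ⟨i.1 + 1, i.1.succ_pos⟩ a := by
  simp [eShift]

theorem diagₗ_single (w : Idx → ℂ) (i : Idx) (a : ℂ) :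
    diagₗ w (Finsupp.single i a) = Finsupp.single i (w i * a) := by
  simp [diagₗ, mul_comm]

theorem eOneCoeff_eShift (f : ESpace) : eOneCoeff (eShift f) = 0 := by
  induction f using Finsupp.induction_linear with
  | zero => simp
  | add f₁ f₂ h₁ h₂ => simp only [map_add, h₁, h₂, add_zero]
  | single i a =>
    rw [eShift_single]
    split_ifs
    · simp
    · rw [eOneCoeff_single, if_neg (by simpa using i.2.ne')]

theorem eOneCoeff_diagₗ (w : Idx → ℂ) (f : ESpace) :
    eOneCoeff (diagₗ w f) = w ⟨1, one_pos⟩ * eOneCoeff f := by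
  induction f using Finsupp.induction_linear with
  | zero => simp
  | add f₁ f₂ h₁ h₂ => simp only [map_add, h₁, h₂, mul_add]
  | single i a =>
    rw [diagₗ_single, eOneCoeff_single, eOneCoeff_single]
    split_ifs with h
    · rw [show i = ⟨1, one_pos⟩ from Subtype.ext h]
    · rw [mul_zero]

theorem diagₗ_eShift {w : Idx → ℂ}
    (hw : ∀ i : Idx, i.1 ≠ 1 → w ⟨i.1 + 1, i.1.succ_pos⟩ = w i + w ⟨1, one_pos⟩)
    (f : ESpace) :
    diagₗ w (eShift f) = eShift (diagₗ w f) + w ⟨1, one_pos⟩ • eShift f := by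
  induction f using Finsupp.induction_linear with
  | zero => simp
  | add f₁ f₂ h₁ h₂ =>
    simp only [map_add, h₁, h₂, smul_add]
    abel
  | single i a =>
    rw [diagₗ_single, eShift_single, eShift_single]
    split_ifs with h
    · simp
    · rw [diagₗ_single, hw i h, Finsupp.smul_single, smul_eq_mul, ← Finsupp.single_add]
      ring_nf

theorem diagₗ_comm (v w : Idx → ℂ) (f : ESpace) :
    diagₗ v (diagₗ w f) = diagₗ w (diagₗ v f) := by
  induction f using Finsupp.induction_linear with
  | zero => simp
  | add f₁ f₂ h₁ h₂ => simp only [map_add, h₁, h₂]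
  | single i a => simp only [diagₗ_single, mul_left_comm]

theorem ebr_eq_shiftBracket (f g : ESpace) :
    ebr f g = LinearMap.shiftBracket eOneCoeff eShift f g := by
  conv_rhs => rw [← Finsupp.sum_single f, ← Finsupp.sum_single g]
  simp only [map_finsuppSum, LinearMap.finsupp_sum_apply]
  rw [Finsupp.sum_comm]
  refine Finsupp.sum_congr fun i _ => Finsupp.sum_congr fun j _ => ?_
  rw [LinearMap.shiftBracket_apply, eOneCoeff_single, eOneCoeff_single, eShift_single,
    eShift_single]
  split_ifs <;> first | omega | simp [Finsupp.smul_single, mul_comm]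

noncomputable def xWeight (i : Idx) : ℂ := if i.1 = 1 then 1 else (i.1 : ℂ) - 1

noncomputable def yWeight (i : Idx) : ℂ := if i.1 = 1 then 0 else 1

theorem Xact_eq_diagₗ (f : ESpace) : Xact f = diagₗ xWeight f := by
  simp only [Xact, diagₗ, Finsupp.lsum_apply, mul_smul, xWeight]
  rfl

theorem Yact_eq_diagₗ (f : ESpace) : Yact f = diagₗ yWeight f := by
  simp only [Yact, diagₗ, Finsupp.lsum_apply, mul_smul, yWeight]
  rfl

theorem xWeight_succ (i : Idx) (hi : i.1 ≠ 1) :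
    xWeight ⟨i.1 + 1, i.1.succ_pos⟩ = xWeight i + xWeight ⟨1, one_pos⟩ := by
  simp only [xWeight, if_neg hi, if_neg (show i.1 + 1 ≠ 1 by omega), if_true]
  push_cast
  ring

theorem yWeight_succ (i : Idx) (hi : i.1 ≠ 1) :
    yWeight ⟨i.1 + 1, i.1.succ_pos⟩ = yWeight i + yWeight ⟨1, one_pos⟩ := by
  simp only [yWeight, if_neg hi, if_neg (show i.1 + 1 ≠ 1 by omega), if_true]
  norm_num

theorem diagₗ_shiftBracket {w : Idx → ℂ}
    (hw : ∀ i : Idx, i.1 ≠ 1 → w ⟨i.1 + 1, i.1.succ_pos⟩ = w i + w ⟨1, one_pos⟩)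
    (f g : ESpace) :
    diagₗ w (LinearMap.shiftBracket eOneCoeff eShift f g) =
      LinearMap.shiftBracket eOneCoeff eShift f (diagₗ w g)
        - LinearMap.shiftBracket eOneCoeff eShift g (diagₗ w f) :=
  LinearMap.apply_shiftBracket_of_commutator (eOneCoeff_diagₗ w) (diagₗ_eShift hw) f g

theorem lbr_jacobi (p q r : LSpace) :
    lbr p (lbr q r) + lbr q (lbr r p) + lbr r (lbr p q) = 0 := by
  obtain ⟨a, b, f⟩ := p
  obtain ⟨c, d, g⟩ := q
  obtain ⟨e, h, k⟩ := r
  simp only [lbr, ebr_eq_shiftBracket, Xact_eq_diagₗ, Yact_eq_diagₗ, Prod.mk_add_mk,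
    Prod.mk_eq_zero]
  refine ⟨by ring, by ring, ?_⟩
  simp only [zero_smul, sub_zero, map_add, map_sub, map_smul, diagₗ_shiftBracket xWeight_succ,
    diagₗ_shiftBracket yWeight_succ, diagₗ_comm xWeight yWeight]
  linear_combination (norm := module) LinearMap.shiftBracket_jacobi eOneCoeff_eShift f g k

noncomputable def liftE (K : Submodule ℂ ESpace) : Submodule ℂ LSpace :=
  (⊥ : Submodule ℂ ℂ).prod ((⊥ : Submodule ℂ ℂ).prod K)

theorem mem_liftE {K : Submodule ℂ ESpace} {p : LSpace} :
    p ∈ liftE K ↔ p.1 = 0 ∧ p.2.1 = 0 ∧ p.2.2 ∈ K := by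
  simp only [liftE, Submodule.mem_prod, Submodule.mem_bot]

theorem liftE_bot : liftE ⊥ = ⊥ := by
  simp only [liftE, Submodule.prod_bot]

theorem lbr_mem_liftE_top (p q : LSpace) : lbr p q ∈ liftE ⊤ :=
  mem_liftE.2 ⟨rfl, rfl, Submodule.mem_top⟩

theorem dser_one_le : dser 1 ≤ liftE ⊤ := by
  rw [dser, Submodule.span_le]
  rintro _ ⟨p, q, -, -, rfl⟩
  exact lbr_mem_liftE_top p q

theorem dser_succ_le_liftE {s : ℕ} {K K' : Submodule ℂ ESpace} (hs : dser s ≤ liftE K)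
    (hK : ∀ f ∈ K, ∀ g ∈ K, ebr f g ∈ K') : dser (s + 1) ≤ liftE K' := by
  rw [dser, Submodule.span_le]
  rintro _ ⟨⟨a, b, f⟩, ⟨c, d, g⟩, hp, hq, rfl⟩
  obtain ⟨rfl, rfl, hf⟩ := mem_liftE.1 (hs hp)
  obtain ⟨rfl, rfl, hg⟩ := mem_liftE.1 (hs hq)
  refine mem_liftE.2 ⟨rfl, rfl, ?_⟩
  simpa only [lbr, zero_smul, add_zero, sub_zero] using hK f hf g hg

theorem dser_two_le : dser 2 ≤ liftE (LinearMap.ker eOneCoeff) :=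
  dser_succ_le_liftE dser_one_le fun f _ g _ => by
    rw [LinearMap.mem_ker, ebr_eq_shiftBracket]
    exact LinearMap.apply_shiftBracket eOneCoeff_eShift f g

theorem dser_three_eq_bot : dser 3 = ⊥ := by
  refine le_bot_iff.1 (liftE_bot ▸ dser_succ_le_liftE dser_two_le fun f hf g hg => ?_)
  rw [Submodule.mem_bot, ebr_eq_shiftBracket]
  exact LinearMap.shiftBracket_eq_zero hf hg

theorem mem_lcs_of_lbr_eq_self {v q : LSpace} (h : lbr v q = v) (k : ℕ) : v ∈ lcs k := by
  induction k with
  | zero => exact Submodule.mem_top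
  | succ k ih => exact Submodule.subset_span ⟨v, q, ih, h.symm⟩

theorem lbr_eTwo_neg_y :
    lbr (0, 0, Finsupp.single ⟨2, two_pos⟩ 1) (0, -1, 0) =
      (0, 0, Finsupp.single ⟨2, two_pos⟩ 1) := by
  simp only [lbr, ebr_eq_shiftBracket, Xact_eq_diagₗ, Yact_eq_diagₗ, diagₗ_single, yWeight]
  simp

/-- the Lie algebra with basis `{x, y, e₁, e₂, ...}` and nonzero brackets
`[e_i,e₁] = e_{i+1}` (`i ≥ 2`), `[x,e₁] = e₁`, `[x,e_i] = (i-1)e_i` (`i ≥ 2`),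
`[y,e_i] = e_i` (`i ≥ 2`) satisfies the Jacobi identity, and is potentially solvable
but not potentially nilpotent. -/
theorem statement18 :
    (∀ p q r : LSpace, lbr p (lbr q r) + lbr q (lbr r p) + lbr r (lbr p q) = 0) ∧
    (⨅ s, dser s = ⊥) ∧
    (⨅ k, lcs k ≠ ⊥) := by
  refine ⟨lbr_jacobi, le_bot_iff.1 ((iInf_le dser 3).trans dser_three_eq_bot.le), ?_⟩
  have he₂ := (Submodule.mem_iInf lcs).2 (mem_lcs_of_lbr_eq_self lbr_eTwo_neg_y)
  exact (Submodule.ne_bot_iff _).2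
    ⟨_, he₂, fun h => one_ne_zero (Finsupp.single_eq_zero.1 (congrArg (·.2.2) h))⟩
end
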